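/- arXiv:1212.5660 — 2 statements merged into one kernel-verified Lean document; each statement's English description precedes it below -/
import Mathlib

section
/- Let L be a BL-chain. Then every good sequence of L has the form (1^p, a) for some integer p ≥ 0 and some a ∈ L; that is, if (a₁, a₂, …) is a good sequence, then there exist p ≥ 0 and a ∈ L with aᵢ = 1 for all i ≤ p, a_{p+1} = a, and aᵢ = 0 for all i > p + 1. -/
/-- A BL-algebra: a bounded lattice with a commutative monoid operation `mul`
(written ⊗, with unit `⊤` playing the role of 1 and `⊥` the role of 0),
a residuum `imp` (written →), satisfying residuation, divisibility and
prelinearity. -/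
class BLAlgebra (L : Type*) extends Lattice L, BoundedOrder L where
  mul : L → L → L
  imp : L → L → L
  mul_comm : ∀ x y : L, mul x y = mul y x
  mul_assoc : ∀ x y z : L, mul (mul x y) z = mul x (mul y z)
  mul_top : ∀ x : L, mul x ⊤ = x
  residuation : ∀ x y z : L, mul x y ≤ z ↔ x ≤ imp y z
  divisibility : ∀ x y : L, x ⊓ y = mul x (imp x y)
  prelinearity : ∀ x y : L, imp x y ⊔ imp y x = ⊤

namespace BLAlgebra

variable {L : Type*} [BLAlgebra L]

/-- Negation: x̄ := x → 0. -/
def neg (x : L) : L := imp x ⊥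

/-- Pseudo-addition: x ⊘ y := x̄ → y. -/
def oslash (x y : L) : L := imp (neg x) y

/-- Addition: x + y := (x ⊘ y) ∧ (y ⊘ x). -/
def add (x y : L) : L := oslash x y ⊓ oslash y x

end BLAlgebra

open BLAlgebra
/-- A good sequence in a BL-algebra `L` (indexed from 0, so `a 0` is the entry a₁):
aᵢ + aᵢ₊₁ = aᵢ for all i, and aᵣ = 0 for all sufficiently large r. -/
def BLAlgebra.IsGood {L : Type*} [BLAlgebra L] (a : ℕ → L) : Prop :=
  (∀ i, add (a i) (a (i + 1)) = a i) ∧ ∃ n, ∀ r, n < r → a r = ⊥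

/-- Sum (under the BL-algebra addition) of a list of elements. -/
def BLAlgebra.bigAdd {L : Type*} [BLAlgebra L] (l : List L) : L := l.foldr add ⊥

/-- Sum of sequences: cᵢ := aᵢ + (aᵢ₋₁ ⊗ b₁) + ⋯ + (a₁ ⊗ bᵢ₋₁) + bᵢ
(written with 0-based indexing: the entry at index k is
a k + (a (k-1) ⊗ b 0) + ⋯ + (a 0 ⊗ b (k-1)) + b k). -/
def BLAlgebra.seqAdd {L : Type*} [BLAlgebra L] (a b : ℕ → L) : ℕ → L :=
  fun k => bigAdd (a k :: (((List.range k).map fun j => mul (a (k - 1 - j)) (b j)) ++ [b k]))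

namespace BLAlgebra

variable {L : Type*} [BLAlgebra L]

lemma mul_le_right' (x y : L) : mul x y ≤ y := by
  have h1 : (⊤ : L) ≤ imp y (mul ⊤ y) := (residuation ⊤ y (mul ⊤ y)).mp le_rfl
  have h3 : mul x y ≤ mul ⊤ y := (residuation x y (mul ⊤ y)).mpr (le_trans le_top h1)
  calc mul x y ≤ mul ⊤ y := h3
    _ = mul y ⊤ := mul_comm ⊤ y
    _ = y := mul_top y

lemma imp_eq_top' {u v : L} (h : u ≤ v) : imp u v = ⊤ := by
  refine le_antisymm le_top ?_
  refine (residuation ⊤ u v).mp ?_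
  rw [mul_comm, mul_top]; exact h

lemma mul_neg_self' (y : L) : mul y (neg y) = ⊥ := by
  have h := divisibility y (⊥ : L)
  rw [inf_bot_eq] at h
  exact h.symm ▸ rfl

lemma le_oslash' (y x : L) : y ≤ oslash y x := by
  refine (residuation y (neg y) x).mp ?_
  rw [mul_neg_self']; exact bot_le

lemma key_lemma (htot : ∀ x y : L, x ≤ y ∨ y ≤ x) (x y : L)
    (h : add x y = x) : x = ⊤ ∨ y = ⊥ := by
  unfold add at h
  rcases htot (oslash x y) (oslash y x) with hc | hc
  · -- oslash x y = x
    have hx : oslash x y = x := (inf_eq_left.mpr hc).symm.trans h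
    rcases htot y (neg x) with h1 | h1
    · right
      have hd := divisibility (neg x) y
      unfold oslash at hx
      rw [hx, mul_comm, mul_neg_self'] at hd
      rw [← inf_eq_right.mpr h1]
      exact hd
    · left
      have : oslash x y = ⊤ := imp_eq_top' h1
      rw [← hx, this]
  · -- oslash y x = x
    have hx : oslash y x = x := (inf_eq_right.mpr hc).symm.trans h
    rcases htot (neg y) x with h1 | h1
    · left
      have : oslash y x = ⊤ := imp_eq_top' h1
      rw [← hx, this]
    · right
      have hd := divisibility (neg y) x
      unfold oslash at hx
      rw [hx] at hd
      have hm : mul (neg y) x = x := by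
        rw [← hd, inf_eq_right.mpr h1]
      have hyx : y ≤ x := hx ▸ le_oslash' y x
      have hdy := (divisibility x y).symm.trans (inf_eq_right.mpr hyx)
      calc y = mul x (imp x y) := hdy.symm
        _ = mul (mul (neg y) x) (imp x y) := by rw [hm]
        _ = mul (neg y) (mul x (imp x y)) := mul_assoc _ _ _
        _ = mul (neg y) y := by rw [hdy]
        _ = ⊥ := by rw [mul_comm, mul_neg_self']

end BLAlgebra

/-- In a BL-chain, every good sequence has the form (1^p, a):
the first p entries are 1 (= ⊤), the next entry is some a ∈ L, and all later
entries are 0 (= ⊥). -/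
theorem good_seq_form_chain {L : Type*} [BLAlgebra L]
    (htot : ∀ x y : L, x ≤ y ∨ y ≤ x) (a : ℕ → L) (ha : IsGood a) :
    ∃ (p : ℕ) (x : L), (∀ i, i < p → a i = ⊤) ∧ a p = x ∧ (∀ i, p < i → a i = ⊥) := by
  obtain ⟨hgood, N, hN⟩ := ha
  have hkey : ∀ i, a i = ⊤ ∨ a (i + 1) = ⊥ := fun i =>
    BLAlgebra.key_lemma htot _ _ (hgood i)
  by_cases htb : (⊤ : L) = ⊥
  · refine ⟨0, a 0, fun i hi => absurd hi (by omega), rfl, fun i _ => ?_⟩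
    exact le_antisymm (le_trans le_top (le_of_eq htb)) bot_le
  · have hex : ∃ i, a i ≠ ⊤ := by
      refine ⟨N + 1, ?_⟩
      rw [hN (N + 1) (by omega)]
      exact fun hc => htb hc.symm
    classical
    have hp : a (Nat.find hex) ≠ ⊤ := Nat.find_spec hex
    refine ⟨Nat.find hex, a (Nat.find hex), fun i hi => ?_, rfl, fun i hi => ?_⟩
    · exact not_not.mp (Nat.find_min hex hi)
    · have hstep : ∀ k, a (Nat.find hex + 1 + k) = ⊥ := by
        intro k
        induction k with
        | zero => exact (hkey (Nat.find hex)).resolve_left hp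
        | succ n ih =>
          have h2 := (hkey (Nat.find hex + 1 + n)).resolve_left
            (by rw [ih]; exact fun hc => htb hc.symm)
          have he : Nat.find hex + 1 + n + 1 = Nat.find hex + 1 + (n + 1) := by omega
          rw [← he]; exact h2
      have hi2 : i = Nat.find hex + 1 + (i - Nat.find hex - 1) := by omega
      rw [hi2]; exact hstep _
end

section
/- Let C be a BL-chain and let 𝐚 = (1^p, a) and 𝐛 = (1^q, b) be good sequences in C. Then the sum of sequences 𝐚 + 𝐛 equals (1^{p+q}, a + b, a ⊗ b) (that is, its first p + q entries are 1, the next two entries are a + b and a ⊗ b, and all later entries are 0), and this sequence is again a good sequence. -/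
open BLAlgebra
/-- The good sequence (1^p, x): p leading ⊤'s, then x, then ⊥'s. -/
def oneSeq {L : Type*} [BLAlgebra L] (p : ℕ) (x : L) : ℕ → L :=
  fun i => if i < p then ⊤ else if i = p then x else ⊥

/-- The sequence (1^p, x, y): p leading ⊤'s, then x, then y, then ⊥'s. -/
def twoSeq {L : Type*} [BLAlgebra L] (p : ℕ) (x y : L) : ℕ → L :=
  fun i => if i < p then ⊤ else if i = p then x else if i = p + 1 then y else ⊥

/-!
Prepending `⊤` to both sequences turns the `k`-th entry of `(1^p, a) + (1^q, b)` into the sum of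
the products `ã (k + 1 - j) ⊗ b̃ j` with `ã = (1^(p+1), a)` and `b̃ = (1^(q+1), b)`. Such a product
is `⊤` while both indices are in the `⊤`-blocks and `⊥` once one of them is past its last
nonzero entry; as `⊥` is neutral and `⊤` absorbing for `+`, only `a`, `b` (at `k = p + q`) and
`a ⊗ b` (at `k = p + q + 1`) survive. Goodness then reduces to `(a + b) + a ⊗ b = a + b`, which
holds in a chain because either `a ≤ b̄` or `b ≤ ā`, making `a ⊗ b = ⊥`, or else `a + b = ⊤`.
-/

namespace BLAlgebra

variable {L : Type*} [BLAlgebra L]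

theorem top_mul (x : L) : mul ⊤ x = x := by
  rw [BLAlgebra.mul_comm, mul_top]

theorem imp_eq_top_iff {x y : L} : imp x y = ⊤ ↔ x ≤ y := by
  rw [← top_le_iff, ← residuation, top_mul]

theorem top_imp (x : L) : imp ⊤ x = x :=
  le_antisymm (by simpa only [mul_top] using (residuation _ ⊤ x).2 le_rfl)
    ((residuation x ⊤ x).1 (mul_top x).le)

theorem mul_le_mul_right {x y : L} (h : x ≤ y) (z : L) : mul x z ≤ mul y z :=
  (residuation x z _).2 (h.trans ((residuation y z _).1 le_rfl))

theorem mul_bot (x : L) : mul x ⊥ = ⊥ :=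
  le_bot_iff.1 ((residuation x ⊥ ⊥).2 (le_top.trans (imp_eq_top_iff.2 le_rfl).ge))

theorem bot_mul (x : L) : mul ⊥ x = ⊥ := by
  rw [BLAlgebra.mul_comm, mul_bot]

theorem neg_mul_self (x : L) : mul (neg x) x = ⊥ :=
  le_bot_iff.1 ((residuation (neg x) x ⊥).2 le_rfl)

theorem le_neg_neg (x : L) : x ≤ neg (neg x) :=
  (residuation x (neg x) ⊥).1 (by rw [BLAlgebra.mul_comm, neg_mul_self])

theorem neg_bot : neg (⊥ : L) = ⊤ :=
  imp_eq_top_iff.2 le_rfl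

theorem neg_top : neg (⊤ : L) = ⊥ :=
  top_imp ⊥

theorem add_comm (x y : L) : add x y = add y x :=
  inf_comm _ _

theorem add_bot (x : L) : add x ⊥ = x := by
  rw [add, oslash, oslash, neg_bot, top_imp]
  exact inf_eq_right.2 (le_neg_neg x)

theorem bot_add (x : L) : add ⊥ x = x := by
  rw [add_comm, add_bot]

theorem add_top (x : L) : add x ⊤ = ⊤ := by
  rw [add, oslash, oslash, neg_top, imp_eq_top_iff.2 le_top, imp_eq_top_iff.2 bot_le, inf_idem]

theorem top_add (x : L) : add ⊤ x = ⊤ := by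
  rw [add_comm, add_top]

theorem mul_eq_bot_or_add_eq_top (htot : ∀ x y : L, x ≤ y ∨ y ≤ x) (a b : L) :
    mul a b = ⊥ ∨ add a b = ⊤ := by
  rcases htot (neg a) b with hnab | hbna
  · rcases htot (neg b) a with hnba | hanb
    · right
      rw [add, oslash, oslash, imp_eq_top_iff.2 hnab, imp_eq_top_iff.2 hnba, inf_idem]
    · exact .inl (le_bot_iff.1 ((mul_le_mul_right hanb b).trans (neg_mul_self b).le))
  · left
    rw [BLAlgebra.mul_comm]
    exact le_bot_iff.1 ((mul_le_mul_right hbna a).trans (neg_mul_self a).le)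

theorem add_add_mul (htot : ∀ x y : L, x ≤ y ∨ y ≤ x) (a b : L) :
    add (add a b) (mul a b) = add a b := by
  rcases mul_eq_bot_or_add_eq_top htot a b with h | h
  · rw [h, add_bot]
  · rw [h, top_add]

theorem bigAdd_nil : bigAdd ([] : List L) = ⊥ := rfl

theorem bigAdd_cons (x : L) (l : List L) : bigAdd (x :: l) = add x (bigAdd l) := rfl

theorem bigAdd_eq_top_of_mem {l : List L} (h : ⊤ ∈ l) : bigAdd l = ⊤ := by
  induction l with
  | nil => cases h
  | cons x l ih =>
    rw [bigAdd_cons]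
    rcases List.mem_cons.1 h with rfl | h
    · exact top_add _
    · rw [ih h, add_top]

theorem bigAdd_eq_bot {l : List L} (h : ∀ x ∈ l, x = ⊥) : bigAdd l = ⊥ := by
  induction l with
  | nil => rfl
  | cons x l ih =>
    rw [bigAdd_cons, h x List.mem_cons_self, bot_add,
      ih fun y hy => h y (List.mem_cons_of_mem _ hy)]

theorem bigAdd_append_of_eq_bot (l₁ : List L) {l₂ : List L} (h : ∀ x ∈ l₂, x = ⊥) :
    bigAdd (l₁ ++ l₂) = bigAdd l₁ := by
  induction l₁ with
  | nil => exact bigAdd_eq_bot h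
  | cons x l ih => rw [List.cons_append, bigAdd_cons, bigAdd_cons, ih]

theorem bigAdd_append_of_eq_bot_left {l₁ : List L} (h : ∀ x ∈ l₁, x = ⊥) (l₂ : List L) :
    bigAdd (l₁ ++ l₂) = bigAdd l₂ := by
  induction l₁ with
  | nil => rfl
  | cons x l ih =>
    rw [List.cons_append, bigAdd_cons, h x List.mem_cons_self, bot_add,
      ih fun y hy => h y (List.mem_cons_of_mem _ hy)]

theorem bigAdd_map_range_of_eq_bot (f : ℕ → L) {n s m : ℕ} (hn : s + m ≤ n)
    (hf : ∀ j < n, j < s ∨ s + m ≤ j → f j = ⊥) :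
    bigAdd ((List.range n).map f) = bigAdd ((List.range' s m).map f) := by
  obtain ⟨r, rfl⟩ := Nat.exists_eq_add_of_le hn
  have hsplit :
      List.range (s + m + r) = List.range' 0 s ++ List.range' s m ++ List.range' (s + m) r := by
    rw [List.range_eq_range', ← List.range'_append_1 (m := s + m), ← List.range'_append_1 (m := s),
      Nat.zero_add, Nat.zero_add]
  rw [hsplit, List.map_append, List.map_append, bigAdd_append_of_eq_bot,
    bigAdd_append_of_eq_bot_left]
  all_goals
    simp only [List.mem_map, List.mem_range']
    rintro _ ⟨j, hj, rfl⟩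
    exact hf j (by omega) (by omega)

theorem seqAdd_eq_bigAdd_range {u v u' v' : ℕ → L} (hu₀ : u' 0 = ⊤) (hu : ∀ i, u' (i + 1) = u i)
    (hv₀ : v' 0 = ⊤) (hv : ∀ i, v' (i + 1) = v i) (k : ℕ) :
    seqAdd u v k = bigAdd ((List.range (k + 2)).map fun j => mul (u' (k + 1 - j)) (v' j)) := by
  rw [List.range_succ_eq_map, List.range_succ, seqAdd]
  simp only [List.map_cons, List.map_append, List.map_map, Function.comp_def, Nat.sub_zero,
    Nat.succ_eq_add_one, Nat.sub_self, hu, hv, hu₀, hv₀, mul_top, top_mul]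
  congr 3
  refine List.map_congr_left fun j hj => ?_
  rw [show k + 1 - (j + 1) = (k - 1 - j) + 1 by grind, hu]

theorem oneSeq_zero (p : ℕ) (x : L) : oneSeq (p + 1) x 0 = ⊤ := if_pos p.succ_pos

theorem oneSeq_succ_succ (p i : ℕ) (x : L) : oneSeq (p + 1) x (i + 1) = oneSeq p x i := by
  simp [oneSeq]

theorem oneSeq_of_lt {p i : ℕ} (h : i < p) (x : L) : oneSeq p x i = ⊤ := if_pos h

theorem oneSeq_self (p : ℕ) (x : L) : oneSeq p x p = x := by simp [oneSeq]

theorem oneSeq_of_gt {p i : ℕ} (h : p < i) (x : L) : oneSeq p x i = ⊥ := by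
  simp [oneSeq, show ¬i < p by omega, show i ≠ p by omega]

theorem mul_oneSeq_eq_bot {p q i j : ℕ} (h : p < i ∨ q < j) (x y : L) :
    mul (oneSeq p x i) (oneSeq q y j) = ⊥ := by
  rcases h with h | h
  · rw [oneSeq_of_gt h, bot_mul]
  · rw [oneSeq_of_gt h, mul_bot]

theorem twoSeq_of_lt {p i : ℕ} (h : i < p) (x y : L) : twoSeq p x y i = ⊤ := if_pos h

theorem twoSeq_self (p : ℕ) (x y : L) : twoSeq p x y p = x := by simp [twoSeq]

theorem twoSeq_succ_self (p : ℕ) (x y : L) : twoSeq p x y (p + 1) = y := by simp [twoSeq]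

theorem twoSeq_of_gt {p i : ℕ} (h : p + 1 < i) (x y : L) : twoSeq p x y i = ⊥ := by
  simp [twoSeq, show ¬i < p by omega, show i ≠ p by omega, show i ≠ p + 1 by omega]

theorem isGood_twoSeq (p : ℕ) {x y : L} (h : add x y = x) : IsGood (twoSeq p x y) := by
  refine ⟨fun i => ?_, p + 1, fun r hr => twoSeq_of_gt hr x y⟩
  rcases lt_trichotomy i p with hi | rfl | hi
  · rw [twoSeq_of_lt hi, top_add]
  · rw [twoSeq_self, twoSeq_succ_self, h]
  · rw [twoSeq_of_gt (show p + 1 < i + 1 by omega), add_bot]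

theorem seqAdd_oneSeq (p q : ℕ) (a b : L) :
    seqAdd (oneSeq p a) (oneSeq q b) = twoSeq (p + q) (add a b) (mul a b) := by
  funext k
  rw [seqAdd_eq_bigAdd_range (oneSeq_zero p a) (oneSeq_succ_succ p · a)
    (oneSeq_zero q b) (oneSeq_succ_succ q · b)]
  set f := fun j => mul (oneSeq (p + 1) a (k + 1 - j)) (oneSeq (q + 1) b j)
  have hf_bot : ∀ j, p + 1 < k + 1 - j ∨ q + 1 < j → f j = ⊥ :=
    fun j h => mul_oneSeq_eq_bot h a b
  rcases lt_trichotomy k (p + q) with hk | rfl | hk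
  · rw [twoSeq_of_lt hk]
    refine bigAdd_eq_top_of_mem
      (List.mem_map.2 ⟨min (k + 1) q, by simp only [List.mem_range]; omega, ?_⟩)
    dsimp only [f]
    rw [oneSeq_of_lt (by omega), oneSeq_of_lt (by omega), mul_top]
  · rw [bigAdd_map_range_of_eq_bot f (s := q) (m := 2) (by omega)
      fun j _ hj => hf_bot j (by omega)]
    simp only [f, List.range'_succ, List.range'_zero, List.map_cons, List.map_nil, bigAdd_cons,
      bigAdd_nil]
    rw [twoSeq_self, show p + q + 1 - q = p + 1 by omega, oneSeq_self, oneSeq_of_lt q.lt_succ_self,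
      show p + q + 1 - (q + 1) = p by omega, oneSeq_of_lt p.lt_succ_self, oneSeq_self, mul_top,
      top_mul, add_bot]
  · rcases (Nat.succ_le_of_lt hk).eq_or_lt with rfl | hk
    · rw [bigAdd_map_range_of_eq_bot f (s := q + 1) (m := 1) (by omega)
        fun j _ hj => hf_bot j (by omega)]
      simp only [f, List.range'_one, List.map_cons, List.map_nil, bigAdd_cons,
        bigAdd_nil]
      rw [twoSeq_succ_self, show p + q + 1 + 1 - (q + 1) = p + 1 by omega, oneSeq_self,
        oneSeq_self, add_bot]
    · rw [twoSeq_of_gt hk, bigAdd_map_range_of_eq_bot f (s := 0) (m := 0) (by omega)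
        fun j _ _ => hf_bot j (by omega)]
      exact bigAdd_nil

end BLAlgebra

/-- In a BL-chain, (1^p, a) + (1^q, b) = (1^{p+q}, a + b, a ⊗ b),
and this is again a good sequence. -/
theorem sum_of_good_seqs_chain {L : Type*} [BLAlgebra L]
    (htot : ∀ x y : L, x ≤ y ∨ y ≤ x) (p q : ℕ) (a b : L) :
    seqAdd (oneSeq p a) (oneSeq q b) = twoSeq (p + q) (add a b) (mul a b) ∧
    IsGood (seqAdd (oneSeq p a) (oneSeq q b)) := by
  rw [seqAdd_oneSeq]
  exact ⟨rfl, isGood_twoSeq (p + q) (add_add_mul htot a b)⟩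
end
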